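/- arXiv:2103.02529 — 6 statements merged into one kernel-verified Lean document; each statement's English description precedes it below -/
import Mathlib

section
/- Let S be a Noetherian commutative ring, g ∈ S, and φ an n×n matrix with entries in S satisfying φ² = −g·id_n. Let R = S[[z]]/(z²+g). Then in R^n, the kernel of the map induced by z·id_n − φ equals the image of the map induced by z·id_n + φ. -/
/-- The quotient ring `R = S⟦z⟧/(z² + g)`. -/
noncomputable abbrev QuotRing (S : Type*) [CommRing S] (g : S) : Type _ :=
  PowerSeries S ⧸ Ideal.span {(PowerSeries.X : PowerSeries S) ^ 2 + PowerSeries.C g}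

/-- The image of `z` in `R = S⟦z⟧/(z² + g)`. -/
noncomputable def zbar (S : Type*) [CommRing S] (g : S) : QuotRing S g :=
  Ideal.Quotient.mk _ (PowerSeries.X : PowerSeries S)

/-- The reduction to `R = S⟦z⟧/(z² + g)` of a matrix with entries in `S`. -/
noncomputable def matBar (S : Type*) [CommRing S] (g : S) {n : ℕ}
    (φ : Matrix (Fin n) (Fin n) S) : Matrix (Fin n) (Fin n) (QuotRing S g) :=
  φ.map (fun s => Ideal.Quotient.mk _ (PowerSeries.C s))

open PowerSeries

/-- In a Noetherian commutative ring `S`, `z² + g` is a regular element of `S⟦z⟧`. -/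
lemma regular_X_sq_add_C {S : Type*} [CommRing S] [IsNoetherianRing S] (g : S)
    (f : PowerSeries S)
    (hf : ((PowerSeries.X : PowerSeries S) ^ 2 + PowerSeries.C g) * f = 0) : f = 0 := by
  set a : ℕ → S := fun m => PowerSeries.coeff m f with ha
  have hrel : ∀ m, a m + g * a (m + 2) = 0 := by
    intro m
    have h := congrArg (PowerSeries.coeff (m + 2)) hf
    rwa [add_mul, map_add, map_zero, PowerSeries.coeff_X_pow_mul,
      PowerSeries.coeff_C_mul] at h
  have h01 : ∀ m, m < 2 → g * a m = 0 := by
    intro m hm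
    have h := congrArg (PowerSeries.coeff m) hf
    rwa [add_mul, map_add, map_zero, mul_comm ((PowerSeries.X : PowerSeries S) ^ 2) f,
      PowerSeries.coeff_mul_X_pow', if_neg (by omega), PowerSeries.coeff_C_mul,
      zero_add] at h
  -- the chain of annihilators of powers of g
  let I : ℕ →o Submodule S S :=
    ⟨fun k => LinearMap.ker (LinearMap.mulLeft S (g ^ k)),
      monotone_nat_of_le_succ (by
        intro k x hx
        simp only [LinearMap.mem_ker, LinearMap.mulLeft_apply] at hx ⊢
        rw [pow_succ', mul_assoc, hx, mul_zero])⟩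
  obtain ⟨N, hN⟩ := monotone_stabilizes_iff_noetherian.mpr
    (inferInstance : IsNoetherian S S) I
  have hpow : ∀ m, g ^ (m + 1) * a m = 0 := by
    have key : ∀ m, g ^ (m + 1) * a m = 0 ∧ g ^ (m + 2) * a (m + 1) = 0 := by
      intro m
      induction m with
      | zero =>
        refine ⟨by simpa using h01 0 (by omega), ?_⟩
        have h1 := h01 1 (by omega)
        calc g ^ 2 * a 1 = g * (g * a 1) := by ring
          _ = 0 := by rw [h1, mul_zero]
      | succ k ih =>
        refine ⟨ih.2, ?_⟩
        have h := hrel k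
        have h' : g * a (k + 2) = -a k := by linear_combination h
        calc g ^ (k + 1 + 2) * a (k + 1 + 1)
            = g ^ (k + 2) * (g * a (k + 2)) := by ring_nf
          _ = g ^ (k + 2) * (-a k) := by rw [h']
          _ = -(g * (g ^ (k + 1) * a k)) := by ring
          _ = 0 := by rw [ih.1, mul_zero, neg_zero]
    exact fun m => (key m).1
  have hiter : ∀ k m, a m = (-g) ^ k * a (m + 2 * k) := by
    intro k
    induction k with
    | zero => intro m; simp
    | succ k ih =>
      intro m
      have h := hrel m
      have h' : a m = -g * a (m + 2) := by linear_combination h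
      calc a m = -g * a (m + 2) := h'
        _ = -g * ((-g) ^ k * a (m + 2 + 2 * k)) := by rw [← ih (m + 2)]
        _ = (-g) ^ (k + 1) * a (m + 2 * (k + 1)) := by
            rw [show m + 2 + 2 * k = m + 2 * (k + 1) by ring]; ring
  have hzero : ∀ m, a m = 0 := by
    intro m
    have h1 : g ^ (m + 2 * N + 1) * a (m + 2 * N) = 0 := hpow _
    have h2 : a (m + 2 * N) ∈ I N := by
      rw [hN (m + 2 * N + 1) (by omega)]
      exact h1
    have h3 : g ^ N * a (m + 2 * N) = 0 := by
      exact h2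
    rw [hiter N m, neg_pow, mul_assoc, h3, mul_zero]
  exact PowerSeries.ext fun m => by simpa using hzero m

set_option maxHeartbeats 1000000 in
/-- Let `S` be a Noetherian commutative ring, `g ∈ S`, and `φ` an `n × n`
matrix with entries in `S` with `φ² = -g • id_n` (so `(z·id - φ, z·id + φ)` is a matrix
factorization of `z² + g`).  Let `R = S⟦z⟧/(z² + g)`.  Then, over `Rⁿ`, the kernel of the map
induced by `z·id_n - φ` equals the image of the map induced by `z·id_n + φ`. -/
theorem ker_eq_image_of_matrix_factorization
    (S : Type*) [CommRing S] [IsNoetherianRing S] (g : S) (n : ℕ)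
    (φ : Matrix (Fin n) (Fin n) S)
    (hφ : φ * φ = -(g • (1 : Matrix (Fin n) (Fin n) S))) :
    LinearMap.ker (Matrix.mulVecLin
        (zbar S g • (1 : Matrix (Fin n) (Fin n) (QuotRing S g)) - matBar S g φ))
      = LinearMap.range (Matrix.mulVecLin
        (zbar S g • (1 : Matrix (Fin n) (Fin n) (QuotRing S g)) + matBar S g φ)) := by
  classical
  set p : PowerSeries S := (PowerSeries.X : PowerSeries S) ^ 2 + PowerSeries.C g with hp
  let q : PowerSeries S →+* QuotRing S g := Ideal.Quotient.mk (Ideal.span {p})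
  have hqp : q p = 0 := by
    rw [Ideal.Quotient.eq_zero_iff_mem]
    exact Ideal.subset_span rfl
  set Φ : Matrix (Fin n) (Fin n) (PowerSeries S) := φ.map (PowerSeries.C) with hΦ
  set MA : Matrix (Fin n) (Fin n) (PowerSeries S) :=
    (PowerSeries.X : PowerSeries S) • 1 - Φ with hMA
  set NA : Matrix (Fin n) (Fin n) (PowerSeries S) :=
    (PowerSeries.X : PowerSeries S) • 1 + Φ with hNA
  -- Φ² = -(C g) • 1
  have hΦ2 : Φ * Φ = -(PowerSeries.C g • (1 : Matrix (Fin n) (Fin n) (PowerSeries S))) := by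
    rw [hΦ, ← Matrix.map_mul, hφ]
    ext i j
    simp [Matrix.map_apply, Matrix.one_apply, apply_ite (PowerSeries.C), mul_ite]
  have hNM : NA * MA = p • (1 : Matrix (Fin n) (Fin n) (PowerSeries S)) := by
    simp only [hNA, hMA, add_mul, mul_sub, Matrix.smul_mul, Matrix.mul_smul, one_mul,
      mul_one, smul_smul, hΦ2, hp, pow_two, add_smul, sub_neg_eq_add]
    abel
  have hMN : MA * NA = p • (1 : Matrix (Fin n) (Fin n) (PowerSeries S)) := by
    simp only [hNA, hMA, sub_mul, mul_add, Matrix.smul_mul, Matrix.mul_smul, one_mul,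
      mul_one, smul_smul, hΦ2, hp, pow_two, add_smul, sub_neg_eq_add]
    abel
  -- reductions
  have hMbar : MA.map q = zbar S g • 1 - matBar S g φ := by
    ext i j
    simp [hMA, hΦ, Matrix.map_apply, Matrix.sub_apply, Matrix.smul_apply, matBar, zbar,
      Matrix.one_apply, apply_ite q, smul_eq_mul, q]
    rfl
  have hNbar : NA.map q = zbar S g • 1 + matBar S g φ := by
    ext i j
    simp [hNA, hΦ, Matrix.map_apply, Matrix.add_apply, Matrix.smul_apply, matBar, zbar,
      Matrix.one_apply, apply_ite q, smul_eq_mul, q]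
    rfl
  ext v
  simp only [LinearMap.mem_ker, LinearMap.mem_range, Matrix.mulVecLin_apply]
  constructor
  · intro hv
    choose w hw using fun i => Ideal.Quotient.mk_surjective (I := Ideal.span {p}) (v i)
    have h1 : ∀ i, q ((MA.mulVec w) i) = 0 := by
      intro i
      rw [RingHom.map_mulVec, hMbar, show (q ∘ w) = v from funext hw, hv, Pi.zero_apply]
    have h2 : ∀ i, ∃ u, (MA.mulVec w) i = p * u := by
      intro i
      have hm := Ideal.Quotient.eq_zero_iff_mem.mp (h1 i)
      rwa [Ideal.mem_span_singleton] at hm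
    choose u hu using h2
    have hMAw : MA.mulVec w = p • u := funext fun i => hu i
    have h3 : p • w = p • (NA.mulVec u) := by
      calc p • w = (p • (1 : Matrix (Fin n) (Fin n) (PowerSeries S))).mulVec w := by
            rw [Matrix.smul_mulVec, Matrix.one_mulVec]
        _ = NA.mulVec (MA.mulVec w) := by rw [Matrix.mulVec_mulVec, hNM]
        _ = NA.mulVec (p • u) := by rw [hMAw]
        _ = p • (NA.mulVec u) := Matrix.mulVec_smul NA p u
    have h4 : w = NA.mulVec u := by
      funext i
      have h6 : p * w i = p * (NA.mulVec u) i := congrFun h3 i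
      have h5 : p * (w i - NA.mulVec u i) = 0 := by rw [mul_sub, h6, sub_self]
      have h7 := regular_X_sq_add_C g _ (by rw [← hp]; exact h5)
      exact sub_eq_zero.mp h7
    refine ⟨q ∘ u, ?_⟩
    funext i
    rw [← hNbar, ← RingHom.map_mulVec, ← h4]
    exact hw i
  · rintro ⟨w, hw⟩
    rw [← hw, Matrix.mulVec_mulVec]
    have hz : (zbar S g • 1 - matBar S g φ) * (zbar S g • 1 + matBar S g φ) = 0 := by
      rw [← hMbar, ← hNbar, ← Matrix.map_mul, hMN]
      ext i j
      simp only [Matrix.map_apply, Matrix.smul_apply, smul_eq_mul, map_mul, hqp,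
        zero_mul, Matrix.zero_apply]
    rw [hz, Matrix.zero_mulVec]
end

section
/- Let S be a Noetherian commutative ring, g ∈ S, φ an n×n matrix with entries in S with φ² = −g·id_n, and R = S[[z]]/(z²+g). If M = coker(z·id_n − φ) over R, then the image of the natural map Hom_R(M,R) → Hom_R(R^n,R) ≅ R^n equals the image (column space) of the matrix z·id_n + φᵀ over R. -/
open Matrix


open PowerSeries in
lemma nzd_X_sq_add {S : Type*} [CommRing S] [IsNoetherianRing S] (g : S)
    (f : PowerSeries S) (h : ((X : PowerSeries S) ^ 2 + C g) * f = 0) : f = 0 := by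
  have hc : ∀ k, (coeff k) (((X : PowerSeries S) ^ 2 + C g) * f) = 0 := by
    intro k; rw [h, map_zero]
  have h01 : ∀ k, k < 2 → g * coeff k f = 0 := by
    intro k hk
    have := hc k
    rwa [add_mul, map_add, coeff_X_pow_mul', if_neg (by omega), zero_add, coeff_C_mul] at this
  have hrec : ∀ k, coeff k f = -(g * coeff (k + 2) f) := by
    intro k
    have := hc (k + 2)
    rw [add_mul, map_add, coeff_X_pow_mul, coeff_C_mul] at this
    linear_combination this
  -- every coefficient is killed by a power of g
  have hkill : ∀ m, g ^ (m + 1) * coeff m f = 0 := by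
    intro m
    induction m using Nat.twoStepInduction with
    | zero => simpa using h01 0 (by omega)
    | one => simpa [pow_succ, mul_assoc] using mul_eq_zero_of_right g (h01 1 (by omega))
    | more m ih _ =>
      have : g * coeff (m + 2) f = -coeff m f := by
        have h2 := hrec m; linear_combination h2
      calc g ^ (m + 2 + 1) * coeff (m + 2) f
          = g ^ (m + 2) * (g * coeff (m + 2) f) := by ring
        _ = -(g * (g ^ (m + 1) * coeff m f)) := by rw [this]; ring
        _ = 0 := by rw [ih, mul_zero, neg_zero]
  -- iteration of the recursion
  have hiter : ∀ k j, coeff k f = (-g) ^ j * coeff (k + 2 * j) f := by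
    intro k j
    induction j with
    | zero => simp
    | succ j ih =>
      rw [ih]
      have : k + 2 * j + 2 = k + 2 * (j + 1) := by ring
      rw [hrec (k + 2 * j), this]
      ring
  -- annihilator chain stabilizes
  obtain ⟨N, hN⟩ := (monotone_stabilizes_iff_noetherian.mpr
    (inferInstance : IsNoetherian S S))
    ⟨fun m => LinearMap.ker (LinearMap.lsmul S S (g ^ m)),
      by
        intro a b hab
        simp only [SetLike.le_def, LinearMap.mem_ker, LinearMap.lsmul_apply, smul_eq_mul]
        intro x hx
        obtain ⟨c, rfl⟩ := Nat.exists_eq_add_of_le hab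
        rw [show g ^ (a + c) * x = g ^ c * (g ^ a * x) by ring, hx, mul_zero]⟩
  ext k
  rw [map_zero]
  set x := coeff (k + 2 * (N + 1)) f with hx
  have hmem : x ∈ LinearMap.ker (LinearMap.lsmul S S (g ^ (k + 2 * (N + 1) + 1))) := by
    simpa [LinearMap.mem_ker] using hkill (k + 2 * (N + 1))
  have hNx : g ^ N * x = 0 := by
    have heq := hN (k + 2 * (N + 1) + 1) (by omega)
    change LinearMap.ker (LinearMap.lsmul S S (g ^ N)) = LinearMap.ker (LinearMap.lsmul S S (g ^ (k + 2 * (N + 1) + 1))) at heq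
    rw [← heq] at hmem
    simpa using hmem
  have hjx : g ^ (N + 1) * x = 0 := by rw [pow_succ, mul_comm (g^N) g, mul_assoc, hNx, mul_zero]
  rw [hiter k (N + 1), ← hx, neg_pow]
  rw [mul_assoc, hjx, mul_zero]


lemma matfactor {α : Type*} [CommRing α] {n : ℕ} (t c : α) (ψ : Matrix (Fin n) (Fin n) α)
    (h : ψ * ψ = -(c • 1)) :
    ((t • 1 - ψ) * (t • 1 + ψ) = (t ^ 2 + c) • (1 : Matrix (Fin n) (Fin n) α)) ∧
    ((t • 1 + ψ) * (t • 1 - ψ) = (t ^ 2 + c) • (1 : Matrix (Fin n) (Fin n) α)) := by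
  constructor <;>
  · simp only [sub_mul, mul_add, add_mul, mul_sub, h,
      smul_mul_assoc, mul_smul_comm, one_mul, mul_one, smul_smul, ← sq, add_smul, sub_neg_eq_add]
    module

lemma aux_dual {α : Type*} [CommRing α] {n : ℕ} (A : Matrix (Fin n) (Fin n) α)
    (v : Fin n → α) (j : Fin n) :
    (Aᵀ *ᵥ v) j = v ⬝ᵥ (A *ᵥ Pi.single j 1) := by
  rw [show A *ᵥ Pi.single j 1 = fun i => A i j * 1 from Matrix.mulVec_single A j 1]
  simp [Matrix.mulVec, dotProduct, Matrix.transpose_apply, mul_comm]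



set_option maxHeartbeats 1000000 in
set_option synthInstance.maxHeartbeats 400000 in
/-- Let `S` be a Noetherian commutative ring, `g ∈ S`, `φ` an `n × n` matrix
with entries in `S` with `φ² = -g • id_n`, and `R = S⟦z⟧/(z² + g)`.
Let `M = coker(z·id_n - φ)` over `R`.  Then the image of the natural map
`Hom_R(M, R) → Hom_R(Rⁿ, R) ≅ Rⁿ` (given by `f ↦ (f(p e₁), …, f(p eₙ))`, where `p : Rⁿ → M`
is the projection and `eᵢ` the standard basis) equals the column space of `z·id_n + φᵀ`. -/
theorem image_of_dual_of_coker_eq_image_of_transpose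
    (S : Type*) [CommRing S] [IsNoetherianRing S] (g : S) (n : ℕ)
    (φ : Matrix (Fin n) (Fin n) S)
    (hφ : φ * φ = -(g • (1 : Matrix (Fin n) (Fin n) S))) :
    Set.range (fun (f : ((Fin n → QuotRing S g) ⧸ LinearMap.range (Matrix.mulVecLin
          (zbar S g • (1 : Matrix (Fin n) (Fin n) (QuotRing S g)) - matBar S g φ)))
            →ₗ[QuotRing S g] QuotRing S g) =>
        fun i => f (Submodule.Quotient.mk (Pi.single i 1)))
      = ↑(LinearMap.range (Matrix.mulVecLin
          (zbar S g • (1 : Matrix (Fin n) (Fin n) (QuotRing S g)) + Matrix.transpose (matBar S g φ)))) := by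
  classical
  set π : PowerSeries S →+* QuotRing S g := Ideal.Quotient.mk _ with hπ
  have hπs : Function.Surjective π := Ideal.Quotient.mk_surjective
  set A : Matrix (Fin n) (Fin n) (QuotRing S g) := zbar S g • 1 - matBar S g φ with hA
  set B : Matrix (Fin n) (Fin n) (QuotRing S g) := zbar S g • 1 + (matBar S g φ)ᵀ with hB
  set ψ : Matrix (Fin n) (Fin n) (PowerSeries S) := φᵀ.map (PowerSeries.C (R := S)) with hψdef
  -- φᵀ * φᵀ = -(g • 1)
  have hφT : φᵀ * φᵀ = -(g • (1 : Matrix (Fin n) (Fin n) S)) := by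
    rw [← Matrix.transpose_mul, hφ, Matrix.transpose_neg, Matrix.transpose_smul,
      Matrix.transpose_one]
  -- ψ * ψ = -(C g • 1)
  have hψmul : ψ * ψ = -((PowerSeries.C g) • 1) := by
    calc ψ * ψ = (PowerSeries.C (R := S)).mapMatrix φᵀ * (PowerSeries.C (R := S)).mapMatrix φᵀ := rfl
      _ = (PowerSeries.C (R := S)).mapMatrix (φᵀ * φᵀ) := (map_mul _ _ _).symm
      _ = (PowerSeries.C (R := S)).mapMatrix (-(g • 1)) := by rw [hφT]
      _ = -((PowerSeries.C g) • 1) := by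
          rw [map_neg]
          congr 1
          rw [Matrix.smul_one_eq_diagonal, RingHom.mapMatrix_apply,
            Matrix.diagonal_map (map_zero _), Matrix.smul_one_eq_diagonal]
  -- relation between ψ and matBar
  have hbar : ψ.map π = (matBar S g φ)ᵀ := by
    rw [hψdef, Matrix.map_map]
    exact (Matrix.transpose_map).symm ▸ rfl
  -- map of X • 1
  have hmapX : ((PowerSeries.X : PowerSeries S) •
      (1 : Matrix (Fin n) (Fin n) (PowerSeries S))).map π = zbar S g • 1 := by
    rw [Matrix.smul_one_eq_diagonal, Matrix.diagonal_map (map_zero _),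
      Matrix.smul_one_eq_diagonal]
    rfl
  have hAT : Aᵀ = zbar S g • 1 - (matBar S g φ)ᵀ := by
    rw [hA, Matrix.transpose_sub, Matrix.transpose_smul, Matrix.transpose_one]
  have hmapsub : ((PowerSeries.X : PowerSeries S) • 1 - ψ).map π = Aᵀ := by
    calc ((PowerSeries.X : PowerSeries S) • 1 - ψ).map π
        = π.mapMatrix (PowerSeries.X • 1 - ψ) := rfl
      _ = π.mapMatrix ((PowerSeries.X : PowerSeries S) • 1) - π.mapMatrix ψ := map_sub _ _ _
      _ = zbar S g • 1 - (matBar S g φ)ᵀ := by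
          rw [RingHom.mapMatrix_apply, RingHom.mapMatrix_apply, hmapX, hbar]
      _ = Aᵀ := hAT.symm
  have hmapadd : ((PowerSeries.X : PowerSeries S) • 1 + ψ).map π = B := by
    calc ((PowerSeries.X : PowerSeries S) • 1 + ψ).map π
        = π.mapMatrix ((PowerSeries.X : PowerSeries S) • 1 + ψ) := rfl
      _ = π.mapMatrix ((PowerSeries.X : PowerSeries S) • 1) + π.mapMatrix ψ := map_add _ _ _
      _ = B := by rw [RingHom.mapMatrix_apply, RingHom.mapMatrix_apply, hmapX, hbar, hB]
  -- z² + g = 0 in R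
  have hzg : zbar S g ^ 2 + π (PowerSeries.C g) = 0 := by
    rw [show zbar S g = π PowerSeries.X from rfl, ← map_pow, ← map_add]
    exact Ideal.Quotient.eq_zero_iff_mem.mpr (Ideal.mem_span_singleton_self _)
  -- matBarᵀ squared
  have hψRmul : (matBar S g φ)ᵀ * (matBar S g φ)ᵀ = -((π (PowerSeries.C g)) • 1) := by
    calc (matBar S g φ)ᵀ * (matBar S g φ)ᵀ = (ψ.map π) * (ψ.map π) := by rw [hbar]
      _ = π.mapMatrix ψ * π.mapMatrix ψ := rfl
      _ = π.mapMatrix (ψ * ψ) := (map_mul _ _ _).symm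
      _ = π.mapMatrix (-((PowerSeries.C g) • 1)) := by rw [hψmul]
      _ = -((π (PowerSeries.C g)) • 1) := by
          rw [map_neg]
          congr 1
          rw [Matrix.smul_one_eq_diagonal, RingHom.mapMatrix_apply,
            Matrix.diagonal_map (map_zero _), Matrix.smul_one_eq_diagonal]
  have hABz : Aᵀ * B = 0 := by
    rw [hAT, hB, (matfactor (zbar S g) (π (PowerSeries.C g)) _ hψRmul).1, hzg]
    exact zero_smul (QuotRing S g) (1 : Matrix (Fin n) (Fin n) (QuotRing S g))
  ext v
  simp only [Set.mem_range, SetLike.mem_coe, LinearMap.mem_range]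
  constructor
  · rintro ⟨f, rfl⟩
    set v : Fin n → QuotRing S g := fun i => f (Submodule.Quotient.mk
      (p := LinearMap.range (Matrix.mulVecLin A))
      (Pi.single i 1 : Fin n → QuotRing S g)) with hv
    have hfmk : ∀ x : Fin n → QuotRing S g, f (Submodule.Quotient.mk x) = v ⬝ᵥ x := by
      intro x
      have hmkl : ∀ y : Fin n → QuotRing S g, f (Submodule.Quotient.mk y)
          = (f ∘ₗ Submodule.mkQ (LinearMap.range (Matrix.mulVecLin A))) y := fun _ => rfl
      have hx : (∑ i, x i • (Pi.single i (1 : QuotRing S g) : Fin n → QuotRing S g)) = x := by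
        ext j
        rw [Finset.sum_apply]
        simp [Pi.single_apply]
      calc f (Submodule.Quotient.mk x)
          = (f ∘ₗ Submodule.mkQ (LinearMap.range (Matrix.mulVecLin A)))
            (∑ i, x i • (Pi.single i (1 : QuotRing S g) : Fin n → QuotRing S g)) := by
            rw [hx]; exact hmkl x
        _ = ∑ i, x i • (f ∘ₗ Submodule.mkQ (LinearMap.range (Matrix.mulVecLin A)))
            (Pi.single i (1 : QuotRing S g) : Fin n → QuotRing S g) := by
            rw [map_sum]
            exact Finset.sum_congr rfl fun i _ => map_smul _ _ _
        _ = v ⬝ᵥ x := by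
            rw [dotProduct]
            exact Finset.sum_congr rfl fun i _ => by
              rw [← hmkl, hv, smul_eq_mul, mul_comm]
    have hAv : Aᵀ *ᵥ v = 0 := by
      ext j
      have h0 : f (Submodule.Quotient.mk (A *ᵥ Pi.single j 1)) = 0 := by
        have hmk : (Submodule.Quotient.mk (A *ᵥ Pi.single j 1) :
            (Fin n → QuotRing S g) ⧸ LinearMap.range (Matrix.mulVecLin A)) = 0 :=
          (Submodule.Quotient.mk_eq_zero _).mpr
            ⟨Pi.single j 1, by rw [Matrix.mulVecLin_apply]⟩
        rw [hmk, map_zero]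
      rw [hfmk] at h0
      rw [aux_dual A v j, h0]
      rfl
    choose vt hvt using fun i => hπs (v i)
    have hcomp : ∀ i, π ((((PowerSeries.X : PowerSeries S) • 1 - ψ) *ᵥ vt) i) = 0 := by
      intro i
      rw [RingHom.map_mulVec, hmapsub, show (π ∘ vt) = v from funext hvt, hAv]
      rfl
    have hdvd : ∀ i, ∃ u, (((PowerSeries.X : PowerSeries S) • 1 - ψ) *ᵥ vt) i
        = ((PowerSeries.X : PowerSeries S) ^ 2 + PowerSeries.C g) * u := by
      intro i
      have hm := Ideal.Quotient.eq_zero_iff_mem.mp (hcomp i)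
      exact Ideal.mem_span_singleton.mp hm
    choose u hu using hdvd
    have hfac := matfactor (PowerSeries.X : PowerSeries S) (PowerSeries.C g) ψ hψmul
    set w : Fin n → PowerSeries S := vt - ((PowerSeries.X : PowerSeries S) • 1 + ψ) *ᵥ u with hw
    have hw0 : (((PowerSeries.X : PowerSeries S) • 1 - ψ)) *ᵥ w = 0 := by
      rw [hw, Matrix.mulVec_sub, Matrix.mulVec_mulVec, hfac.1]
      ext i
      simp [hu i, Matrix.smul_mulVec, Matrix.one_mulVec]
    have hw00 : ∀ i, ((PowerSeries.X : PowerSeries S) ^ 2 + PowerSeries.C g) * w i = 0 := by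
      intro i
      have h1 : (((PowerSeries.X : PowerSeries S) • 1 + ψ)
          * ((PowerSeries.X : PowerSeries S) • 1 - ψ)) *ᵥ w = 0 := by
        rw [← Matrix.mulVec_mulVec, hw0, Matrix.mulVec_zero]
      rw [hfac.2] at h1
      have h2 := congrFun h1 i
      simpa [Matrix.smul_mulVec, Matrix.one_mulVec] using h2
    have hwz : w = 0 := funext fun i => nzd_X_sq_add g (w i) (hw00 i)
    have hvtB : vt = ((PowerSeries.X : PowerSeries S) • 1 + ψ) *ᵥ u := by
      rw [hw] at hwz
      exact sub_eq_zero.mp hwz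
    refine ⟨π ∘ u, ?_⟩
    ext i
    rw [Matrix.mulVecLin_apply, ← hvt i, hvtB, ← hmapadd]
    exact (RingHom.map_mulVec π _ u i).symm
  · rintro ⟨w, rfl⟩
    let ℓ : (Fin n → QuotRing S g) →ₗ[QuotRing S g] QuotRing S g :=
      { toFun := fun x => Matrix.mulVecLin B w ⬝ᵥ x
        map_add' := fun x y => dotProduct_add _ _ _
        map_smul' := fun c x => by
          simp only [RingHom.id_apply]
          exact dotProduct_smul c _ _ }
    have hle : LinearMap.range (Matrix.mulVecLin A) ≤ LinearMap.ker ℓ := by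
      rintro x ⟨y, rfl⟩
      simp only [LinearMap.mem_ker]
      show Matrix.mulVecLin B w ⬝ᵥ (Matrix.mulVecLin A y) = 0
      rw [Matrix.mulVecLin_apply, Matrix.mulVecLin_apply, dotProduct_mulVec]
      have hz0 : (B *ᵥ w) ᵥ* A = 0 := by
        rw [← Matrix.mulVec_transpose, Matrix.mulVec_mulVec, hABz, Matrix.zero_mulVec]
      rw [hz0, zero_dotProduct]
    refine ⟨(LinearMap.range (Matrix.mulVecLin A)).liftQ ℓ hle, ?_⟩
    ext i
    show ℓ (Pi.single i 1) = Matrix.mulVecLin B w i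
    show Matrix.mulVecLin B w ⬝ᵥ Pi.single i 1 = Matrix.mulVecLin B w i
    rw [dotProduct_single, mul_one]
end

section
/- Let S be a Noetherian commutative ring, g ∈ S, φ an n×n matrix with entries in S with φ² = −g·id_n, and R = S[[z]]/(z²+g). If M = coker(z·id_n − φ) over R, then the trace ideal of M (the ideal generated by f(m) for all f ∈ Hom_R(M,R) and m ∈ M) equals the ideal of R generated by the entries of the matrix z·id_n + φ. -/
/-- The trace ideal of an `R`-module `M`: the sum of the images of all `R`-linear maps
`M → R`, i.e. the ideal generated by `f(m)` for `f ∈ Hom_R(M, R)` and `m ∈ M`. -/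
def traceIdeal (R : Type*) [CommRing R] (M : Type*) [AddCommGroup M] [Module R M] :
    Ideal R :=
  ⨆ f : M →ₗ[R] R, LinearMap.range f

section Aux

open PowerSeries

/-- In a Noetherian ring the annihilators of powers of `g` stabilize. -/
lemma aux_ann_stab {S : Type*} [CommRing S] [IsNoetherianRing S] (g : S) :
    ∃ N : ℕ, ∀ x : S, g ^ (N + 1) * x = 0 → g ^ N * x = 0 := by
  have hmono : Monotone (fun m : ℕ => LinearMap.ker (LinearMap.lsmul S S (g ^ m))) := by
    intro a b hab x hx
    obtain ⟨d, rfl⟩ := Nat.exists_eq_add_of_le hab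
    simp only [LinearMap.mem_ker, LinearMap.lsmul_apply, smul_eq_mul] at hx ⊢
    rw [pow_add, mul_comm (g ^ a) (g ^ d), mul_assoc, hx, mul_zero]
  let Fchain : ℕ →o Ideal S :=
    ⟨fun m : ℕ => LinearMap.ker (LinearMap.lsmul S S (g ^ m)), hmono⟩
  obtain ⟨N, hN⟩ := monotone_stabilizes_iff_noetherian.mpr
    (inferInstance : IsNoetherian S S) Fchain
  refine ⟨N, fun x hx => ?_⟩
  have hx' : x ∈ Fchain (N + 1) := by
    simp only [Fchain, OrderHom.coe_mk, LinearMap.mem_ker, LinearMap.lsmul_apply, smul_eq_mul]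
    exact hx
  rw [← hN (N + 1) (Nat.le_succ N)] at hx'
  simpa [Fchain, LinearMap.mem_ker, LinearMap.lsmul_apply, smul_eq_mul] using hx'

/-- `z² + g` is a non-zero-divisor in `S⟦z⟧` when `S` is Noetherian. -/
lemma aux_nzd {S : Type*} [CommRing S] [IsNoetherianRing S] (g : S)
    (p : PowerSeries S)
    (hp : ((X : PowerSeries S) ^ 2 + C g) * p = 0) : p = 0 := by
  obtain ⟨N, hN⟩ := aux_ann_stab g
  set a : ℕ → S := fun k => coeff k p with ha
  -- the basic recurrence
  have hrec : ∀ k : ℕ, a k + g * a (k + 2) = 0 := by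
    intro k
    have := congrArg (coeff (k + 2)) hp
    rw [add_mul, map_add, coeff_X_pow_mul, coeff_C_mul] at this
    simpa using this
  have hlow : ∀ k : ℕ, k < 2 → g * a k = 0 := by
    intro k hk
    have := congrArg (coeff k) hp
    rw [add_mul, map_add, coeff_C_mul] at this
    have hx : coeff k ((X : PowerSeries S) ^ 2 * p) = 0 := by
      rw [coeff_X_pow_mul']
      simp [Nat.not_le_of_lt hk]
    rw [hx, zero_add] at this
    simpa using this
  -- iterate the recurrence
  have hiter : ∀ (k m : ℕ), a k = (-g) ^ m * a (k + 2 * m) := by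
    intro k m
    induction m with
    | zero => simp
    | succ m ih =>
      have h1 : a (k + 2 * m) = -g * a (k + 2 * m + 2) := by
        have := hrec (k + 2 * m)
        linear_combination this
      rw [ih, h1, ← mul_assoc, ← pow_succ]
      ring_nf
  -- if `g * a k = 0` then `a k = 0`
  have hkill : ∀ k : ℕ, g * a k = 0 → a k = 0 := by
    intro k hg
    have hsq : ((-1 : S) ^ N) * ((-1 : S) ^ N) = 1 := by
      rw [← pow_add]
      exact Even.neg_one_pow ⟨N, rfl⟩
    have h1 : g ^ (N + 1) * a (k + 2 * N) = 0 := by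
      have e1 : g * ((-g) ^ N * a (k + 2 * N)) = 0 := by rw [← hiter k N]; exact hg
      rw [neg_pow] at e1
      calc g ^ (N + 1) * a (k + 2 * N)
          = ((-1 : S) ^ N * (-1 : S) ^ N) * (g ^ (N + 1) * a (k + 2 * N)) := by
            rw [hsq, one_mul]
        _ = (-1 : S) ^ N * (g * ((-1 : S) ^ N * g ^ N * a (k + 2 * N))) := by ring
        _ = 0 := by rw [e1, mul_zero]
    have h4 : g ^ N * a (k + 2 * N) = 0 := hN _ h1
    rw [hiter k N, neg_pow, mul_assoc, h4, mul_zero]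
  -- conclude by strong induction that all coefficients vanish
  have hall : ∀ k : ℕ, a k = 0 := by
    intro k
    induction k using Nat.strong_induction_on with
    | _ k ih =>
      rcases lt_or_ge k 2 with hk | hk
      · exact hkill k (hlow k hk)
      · obtain ⟨j, rfl⟩ := Nat.exists_eq_add_of_le hk
        have hj : a j = 0 := ih j (by omega)
        have : g * a (j + 2) = 0 := by
          have := hrec j
          rw [hj, zero_add] at this
          exact this
        have := hkill (j + 2) this
        simpa [add_comm] using this
  ext k
  simpa using hall k

end Aux

set_option maxHeartbeats 2000000 in
/-- Let `S` be a Noetherian commutative ring, `g ∈ S`, `φ` an `n × n` matrix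
with entries in `S` with `φ² = -g • id_n`, and `R = S⟦z⟧/(z² + g)`.
If `M = coker(z·id_n - φ)` over `R`, then the trace ideal of `M` equals the ideal of `R`
generated by the entries of the matrix `z·id_n + φ`. -/
theorem traceIdeal_coker_eq_span_entries
    (S : Type*) [CommRing S] [IsNoetherianRing S] (g : S) (n : ℕ)
    (φ : Matrix (Fin n) (Fin n) S)
    (hφ : φ * φ = -(g • (1 : Matrix (Fin n) (Fin n) S))) :
    traceIdeal (QuotRing S g)
        ((Fin n → QuotRing S g) ⧸ LinearMap.range (Matrix.mulVecLin
          (zbar S g • (1 : Matrix (Fin n) (Fin n) (QuotRing S g)) - matBar S g φ)))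
      = Ideal.span (Set.range (fun p : Fin n × Fin n =>
          (zbar S g • (1 : Matrix (Fin n) (Fin n) (QuotRing S g)) + matBar S g φ) p.1 p.2)) := by
  classical
  set P := PowerSeries S
  set f0 : P := (PowerSeries.X : P) ^ 2 + PowerSeries.C g with hf0
  set mk : P →+* QuotRing S g := Ideal.Quotient.mk (Ideal.span {f0}) with hmk
  set Phi : Matrix (Fin n) (Fin n) P := φ.map (PowerSeries.C) with hPhi
  set At : Matrix (Fin n) (Fin n) P := (PowerSeries.X : P) • 1 - Phi with hAt
  set Bt : Matrix (Fin n) (Fin n) P := (PowerSeries.X : P) • 1 + Phi with hBt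
  set Abar : Matrix (Fin n) (Fin n) (QuotRing S g) :=
    zbar S g • 1 - matBar S g φ with hAbar
  set Bbar : Matrix (Fin n) (Fin n) (QuotRing S g) :=
    zbar S g • 1 + matBar S g φ with hBbar
  have hmkf0 : mk f0 = 0 := by
    rw [hmk, Ideal.Quotient.eq_zero_iff_mem]
    exact Ideal.subset_span rfl
  -- matrix identities over P
  have hPhi2 : Phi * Phi = -(PowerSeries.C g • (1 : Matrix (Fin n) (Fin n) P)) := by
    rw [hPhi, ← Matrix.map_mul, hφ]
    ext i j
    by_cases h : i = j <;>
      simp [Matrix.map_apply, Matrix.one_apply, h]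
  have hABP : At * Bt = f0 • (1 : Matrix (Fin n) (Fin n) P) := by
    rw [hAt, hBt, sub_mul, mul_add, mul_add, hPhi2]
    simp only [smul_mul_assoc, Matrix.mul_smul, one_mul, mul_one, Matrix.one_mul,
      Matrix.mul_one, smul_smul]
    rw [hf0, add_smul, sq]
    abel
  have hBAP : Bt * At = f0 • (1 : Matrix (Fin n) (Fin n) P) := by
    rw [hAt, hBt, add_mul, mul_sub, mul_sub, hPhi2]
    simp only [smul_mul_assoc, Matrix.mul_smul, one_mul, mul_one, Matrix.one_mul,
      Matrix.mul_one, smul_smul]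
    rw [hf0, add_smul, sq]
    abel
  -- reductions
  have hmap_smul_one : ∀ x : P,
      (x • (1 : Matrix (Fin n) (Fin n) P)).map mk = mk x • 1 := by
    intro x
    ext i j
    by_cases h : i = j <;> simp [Matrix.map_apply, Matrix.one_apply, h]
  have hAbarmap : Abar = At.map mk := by
    rw [hAbar, hAt]
    ext i j
    simp [Matrix.map_apply, Matrix.sub_apply, map_sub, Matrix.smul_apply,
      Matrix.one_apply, matBar, zbar, smul_eq_mul, hPhi, hmk, apply_ite mk]
    rw [apply_ite (Ideal.Quotient.mk (Ideal.span {f0})), map_zero]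
  have hBbarmap : Bbar = Bt.map mk := by
    rw [hBbar, hBt]
    ext i j
    simp [Matrix.map_apply, Matrix.add_apply, map_add, Matrix.smul_apply,
      Matrix.one_apply, matBar, zbar, smul_eq_mul, hPhi, hmk, apply_ite mk]
    rw [apply_ite (Ideal.Quotient.mk (Ideal.span {f0})), map_zero]
  have hBA : Bbar * Abar = 0 := by
    rw [hAbarmap, hBbarmap, ← Matrix.map_mul, hBAP, hmap_smul_one, hmkf0]
    ext i j
    simp
  -- the exactness lemma over R
  have hexact : ∀ v : Fin n → QuotRing S g, Abar.transpose.mulVec v = 0 →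
      ∃ w : Fin n → QuotRing S g, v = Bbar.transpose.mulVec w := by
    intro v hv
    -- lift v to P
    choose vt hvt using fun i => Ideal.Quotient.mk_surjective (I := Ideal.span {f0}) (v i)
    have hcol : ∀ j, ∃ c : P, (At.transpose.mulVec vt) j = f0 * c := by
      intro j
      have h1 : mk ((At.transpose.mulVec vt) j) = 0 := by
        have := RingHom.map_mulVec mk At.transpose vt j
        rw [this]
        have h2 : At.transpose.map mk = Abar.transpose := by
          rw [hAbarmap, Matrix.transpose_map]
        have h3 : (mk ∘ vt) = v := by
          funext i; exact hvt i
        rw [h2, h3]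
        rw [show Abar.transpose.mulVec v = 0 from hv]
        rfl
      rw [hmk, Ideal.Quotient.eq_zero_iff_mem, Ideal.mem_span_singleton] at h1
      obtain ⟨c, hc⟩ := h1
      exact ⟨c, hc⟩
    choose c hc using hcol
    have key : f0 • vt = f0 • (Bt.transpose.mulVec c) := by
      have h1 : Bt.transpose.mulVec (At.transpose.mulVec vt) = f0 • vt := by
        rw [Matrix.mulVec_mulVec, ← Matrix.transpose_mul, hABP]
        rw [Matrix.transpose_smul, Matrix.transpose_one, Matrix.smul_mulVec,
          Matrix.one_mulVec]
      have h2 : At.transpose.mulVec vt = f0 • c := by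
        funext j
        rw [hc j]
        simp [Pi.smul_apply, smul_eq_mul]
      rw [← h1, h2, Matrix.mulVec_smul]
    have heq : vt = Bt.transpose.mulVec c := by
      funext i
      have h3 : f0 * (vt i - (Bt.transpose.mulVec c) i) = 0 := by
        have := congrFun key i
        simp only [Pi.smul_apply, smul_eq_mul] at this
        linear_combination this
      have := aux_nzd g _ h3
      exact sub_eq_zero.mp this
    refine ⟨mk ∘ c, ?_⟩
    funext i
    rw [← hvt i, heq]
    have := RingHom.map_mulVec mk Bt.transpose c i
    rw [this]
    rw [hBbarmap, Matrix.transpose_map]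
  -- now the two inclusions
  apply le_antisymm
  · -- traceIdeal ≤ span
    apply iSup_le
    intro f
    rintro x ⟨m, rfl⟩
    obtain ⟨x', rfl⟩ := Submodule.mkQ_surjective _ m
    set F : (Fin n → QuotRing S g) →ₗ[QuotRing S g] QuotRing S g :=
      f ∘ₗ Submodule.mkQ _ with hF
    have hx' : f (Submodule.mkQ _ x') = F x' := rfl
    rw [hx']
    set v : Fin n → QuotRing S g := fun i => F (fun j => if i = j then 1 else 0) with hv
    have hFv : ∀ y, F y = ∑ i, y i * v i := by
      intro y
      rw [LinearMap.pi_apply_eq_sum_univ F y]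
      simp [hv, smul_eq_mul]
    have hker : Abar.transpose.mulVec v = 0 := by
      funext j
      have hmem : Abar.mulVec (fun k => if j = k then 1 else 0) ∈
          LinearMap.range (Matrix.mulVecLin Abar) :=
        ⟨(fun k => if j = k then 1 else 0), by rw [Matrix.mulVecLin_apply]⟩
      have hzero : F (Abar.mulVec (fun k => if j = k then 1 else 0)) = 0 := by
        rw [hF]
        simp only [LinearMap.comp_apply]
        have : Submodule.mkQ (LinearMap.range (Matrix.mulVecLin Abar))
            (Abar.mulVec (fun k => if j = k then 1 else 0)) = 0 := by
          rw [Submodule.mkQ_apply, Submodule.Quotient.mk_eq_zero]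
          exact hmem
        rw [this, map_zero]
      have hcol : Abar.mulVec (fun k => if j = k then 1 else 0) = fun i => Abar i j := by
        funext i
        simp [Matrix.mulVec, dotProduct, mul_ite, Finset.sum_ite_eq]
      rw [hcol] at hzero
      rw [hFv] at hzero
      rw [Pi.zero_apply, ← hzero]
      simp [Matrix.mulVec, dotProduct, Matrix.transpose_apply, mul_comm]
    obtain ⟨w, hw⟩ := hexact v hker
    rw [hFv]
    apply Ideal.sum_mem
    intro i _
    apply Ideal.mul_mem_left
    rw [hw]
    have : Bbar.transpose.mulVec w i = ∑ j, Bbar j i * w j := by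
      simp [Matrix.mulVec, dotProduct, Matrix.transpose_apply]
    rw [this]
    apply Ideal.sum_mem
    intro j _
    rw [mul_comm]
    apply Ideal.mul_mem_left
    exact Ideal.subset_span ⟨(j, i), rfl⟩
  · -- span ≤ traceIdeal
    rw [Ideal.span_le]
    rintro x ⟨p, rfl⟩
    set F : (Fin n → QuotRing S g) →ₗ[QuotRing S g] QuotRing S g :=
      (LinearMap.proj p.1) ∘ₗ (Matrix.mulVecLin Bbar) with hF
    have hker : LinearMap.range (Matrix.mulVecLin Abar) ≤ LinearMap.ker F := by
      rintro _ ⟨y, rfl⟩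
      rw [LinearMap.mem_ker, hF]
      simp only [LinearMap.comp_apply, Matrix.mulVecLin_apply]
      rw [Matrix.mulVec_mulVec, hBA]
      simp [Matrix.zero_mulVec]
    set fth := Submodule.liftQ _ F hker
    have hval : Bbar p.1 p.2 = fth (Submodule.Quotient.mk (Pi.single p.2 1)) := by
      rw [Submodule.liftQ_apply, hF]
      simp only [LinearMap.comp_apply, Matrix.mulVecLin_apply, LinearMap.proj_apply]
      rw [Matrix.mulVec_single]
      simp
    have : Bbar p.1 p.2 ∈ LinearMap.range fth := ⟨_, hval.symm⟩
    exact le_iSup (fun f : ((Fin n → QuotRing S g) ⧸ LinearMap.range (Matrix.mulVecLin Abar))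
      →ₗ[QuotRing S g] QuotRing S g => LinearMap.range f) fth this
end

section
/- Let R = k[[x,y]]/(x²y) for a field k, and let M₁ = R/(y). Then every R-module homomorphism f : M₁ → R satisfies f(1) ∈ (x²)R, and the trace ideal of M₁ equals (x²)R. -/
set_option maxHeartbeats 1000000


/-- The ring `R = k⟦x,y⟧/(x²y)`. -/
noncomputable abbrev Dinf (k : Type*) [Field k] : Type _ :=
  MvPowerSeries (Fin 2) k ⧸
    Ideal.span {(MvPowerSeries.X 0 : MvPowerSeries (Fin 2) k) ^ 2 * MvPowerSeries.X 1}

/-- The image of `x` in `R = k⟦x,y⟧/(x²y)`. -/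
noncomputable def xD (k : Type*) [Field k] : Dinf k :=
  Ideal.Quotient.mk _ (MvPowerSeries.X 0 : MvPowerSeries (Fin 2) k)

/-- The image of `y` in `R = k⟦x,y⟧/(x²y)`. -/
noncomputable def yD (k : Type*) [Field k] : Dinf k :=
  Ideal.Quotient.mk _ (MvPowerSeries.X 1 : MvPowerSeries (Fin 2) k)

/-- The annihilator of `y` in `R` is contained in `(x²)`. -/
lemma ann_y_mem (k : Type*) [Field k] (a : Dinf k) (h : yD k * a = 0) :
    a ∈ Ideal.span {(xD k) ^ 2} := by
  obtain ⟨p, rfl⟩ := Ideal.Quotient.mk_surjective a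
  have h' : (MvPowerSeries.X 1 : MvPowerSeries (Fin 2) k) * p ∈
      Ideal.span {(MvPowerSeries.X 0 : MvPowerSeries (Fin 2) k) ^ 2 * MvPowerSeries.X 1} := by
    rw [← Ideal.Quotient.eq_zero_iff_mem, map_mul]
    exact h
  rw [Ideal.mem_span_singleton] at h'
  obtain ⟨c, hc⟩ := h'
  have hX1 : (MvPowerSeries.X 1 : MvPowerSeries (Fin 2) k) ≠ 0 := by
    intro h
    have h1 := MvPowerSeries.coeff_X (R := k) (Finsupp.single (1 : Fin 2) 1) 1
    rw [if_pos rfl, h] at h1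
    simp at h1
  have hp : p = (MvPowerSeries.X 0 : MvPowerSeries (Fin 2) k) ^ 2 * c := by
    have : (MvPowerSeries.X 1 : MvPowerSeries (Fin 2) k) * p =
        MvPowerSeries.X 1 * (MvPowerSeries.X 0 ^ 2 * c) := by ring_nf; ring_nf at hc; linear_combination hc
    exact mul_left_cancel₀ hX1 this
  rw [hp]
  rw [Ideal.mem_span_singleton]
  exact ⟨Ideal.Quotient.mk _ c, by rw [xD, ← map_pow, ← map_mul]⟩

theorem traceIdeal_R_mod_y
    (k : Type*) [Field k] :
    (∀ f : (Dinf k ⧸ Ideal.span {yD k}) →ₗ[Dinf k] Dinf k,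
        f (Ideal.Quotient.mk (Ideal.span {yD k}) 1) ∈ Ideal.span {(xD k) ^ 2}) ∧
      traceIdeal (Dinf k) (Dinf k ⧸ Ideal.span {yD k}) = Ideal.span {(xD k) ^ 2} := by
  have key : ∀ f : (Dinf k ⧸ Ideal.span {yD k}) →ₗ[Dinf k] Dinf k,
      f (Ideal.Quotient.mk (Ideal.span {yD k}) 1) ∈ Ideal.span {(xD k) ^ 2} := by
    intro f
    apply ann_y_mem
    have : yD k • f (Ideal.Quotient.mk (Ideal.span {yD k}) 1) =
        f (yD k • Ideal.Quotient.mk (Ideal.span {yD k}) 1) := (f.map_smul _ _).symm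
    rw [← smul_eq_mul, this]
    have hy : yD k • (Ideal.Quotient.mk (Ideal.span {yD k}) 1 :
        Dinf k ⧸ Ideal.span {yD k}) = 0 := by
      have : (yD k • (1 : Dinf k)) ∈ Ideal.span {yD k} := by
        rw [smul_eq_mul, mul_one]; exact Ideal.subset_span rfl
      calc yD k • (Ideal.Quotient.mk (Ideal.span {yD k}) 1 : Dinf k ⧸ Ideal.span {yD k})
          = Ideal.Quotient.mk (Ideal.span {yD k}) (yD k • 1) := rfl
        _ = 0 := Ideal.Quotient.eq_zero_iff_mem.mpr this
    rw [hy, map_zero]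
  refine ⟨key, le_antisymm ?_ ?_⟩
  · apply iSup_le
    intro f
    rintro _ ⟨m, rfl⟩
    obtain ⟨r, rfl⟩ := Ideal.Quotient.mk_surjective m
    have : (Ideal.Quotient.mk (Ideal.span {yD k}) r : Dinf k ⧸ Ideal.span {yD k}) =
        r • Ideal.Quotient.mk (Ideal.span {yD k}) 1 := by
      have h1 : r • (Ideal.Quotient.mk (Ideal.span {yD k}) 1 : Dinf k ⧸ Ideal.span {yD k}) =
          Ideal.Quotient.mk (Ideal.span {yD k}) (r • 1) := rfl
      rw [h1, smul_eq_mul, mul_one]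
    rw [this, f.map_smul]
    exact Ideal.mul_mem_left _ r (key f)
  · rw [Ideal.span_le]
    rintro _ rfl
    -- build the map M₁ → R sending mk r ↦ x² * r
    have hkill : Ideal.span {yD k} ≤ LinearMap.ker (LinearMap.lsmul (Dinf k) (Dinf k) ((xD k)^2)) := by
      rw [Ideal.span_le]
      rintro _ rfl
      simp only [SetLike.mem_coe, LinearMap.mem_ker, LinearMap.lsmul_apply, smul_eq_mul]
      rw [xD, yD, ← map_pow, ← map_mul, Ideal.Quotient.eq_zero_iff_mem]
      exact Ideal.subset_span rfl
    set g : (Dinf k ⧸ Ideal.span {yD k}) →ₗ[Dinf k] Dinf k :=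
      Submodule.liftQ _ (LinearMap.lsmul (Dinf k) (Dinf k) ((xD k)^2)) hkill with hg
    have : (xD k)^2 ∈ LinearMap.range g := by
      refine ⟨Ideal.Quotient.mk _ 1, ?_⟩
      show (LinearMap.lsmul (Dinf k) (Dinf k) ((xD k)^2)) 1 = (xD k)^2
      simp
    exact le_iSup (fun f : (Dinf k ⧸ Ideal.span {yD k}) →ₗ[Dinf k] Dinf k =>
      LinearMap.range f) g this
end

section
/- Let R = k[[x,y]]/(x²y) for a field k, and let M₂ = R/(x²). Then the trace ideal of M₂ equals (y)R, and consequently the intersection of the trace ideals of M₁ = R/(y) and M₂ = R/(x²) is the zero ideal. -/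
open MvPowerSeries

/-- The trace ideal of `R/(a)` is the annihilator of `a`. -/
theorem traceIdeal_quot_span {R : Type*} [CommRing R] (a : R) :
    traceIdeal R (R ⧸ Ideal.span {a})
      = LinearMap.ker (LinearMap.mulLeft R a) := by
  apply le_antisymm
  · refine iSup_le fun f => ?_
    rintro _ ⟨m, rfl⟩
    obtain ⟨b, rfl⟩ := Ideal.Quotient.mk_surjective m
    have hm : a • ((Ideal.Quotient.mk (Ideal.span {a})) b)
        = (0 : R ⧸ Ideal.span {a}) := by
      have : a • ((Ideal.Quotient.mk (Ideal.span {a})) b)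
          = (Ideal.Quotient.mk (Ideal.span {a})) (a * b) := rfl
      rw [this, Ideal.Quotient.eq_zero_iff_mem, Ideal.mem_span_singleton]
      exact dvd_mul_right a b
    simp only [LinearMap.mem_ker, LinearMap.mulLeft_apply]
    calc a * f ((Ideal.Quotient.mk (Ideal.span {a})) b)
        = f (a • (Ideal.Quotient.mk (Ideal.span {a})) b) := (f.map_smul a _).symm
      _ = 0 := by rw [hm, map_zero]
  · intro r hr
    have har : a • r = 0 := by
      simpa only [LinearMap.mem_ker, LinearMap.mulLeft_apply, smul_eq_mul] using hr
    have hle : (Ideal.span {a} : Submodule R R)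
        ≤ LinearMap.ker (LinearMap.toSpanSingleton R R r) := by
      rw [Ideal.span, Submodule.span_le, Set.singleton_subset_iff]
      simpa only [SetLike.mem_coe, LinearMap.mem_ker,
        LinearMap.toSpanSingleton_apply] using har
    set f : (R ⧸ Ideal.span {a}) →ₗ[R] R :=
      Submodule.liftQ _ (LinearMap.toSpanSingleton R R r) hle with hf
    have : r ∈ LinearMap.range f :=
      ⟨Submodule.Quotient.mk 1, by
        rw [hf, Submodule.liftQ_apply, LinearMap.toSpanSingleton_apply, one_smul]⟩
    exact le_iSup (fun g : (R ⧸ Ideal.span {a}) →ₗ[R] R => LinearMap.range g) f this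

theorem X_ne_zero' {k : Type*} [Field k] (s : Fin 2) :
    (X s : MvPowerSeries (Fin 2) k) ≠ 0 := by
  intro h
  have := coeff_index_single_self_X (R := k) s
  rw [h, map_zero] at this
  exact (one_ne_zero : (1:k) ≠ 0) this.symm

theorem coeff_X_mul_shift {k : Type*} [Field k] (s : Fin 2) (m : Fin 2 →₀ ℕ)
    (φ : MvPowerSeries (Fin 2) k) :
    coeff (Finsupp.single s 1 + m) (X s * φ) = coeff m φ := by
  rw [X_def, coeff_add_monomial_mul, one_mul]

/-- If `x² ∣ y·φ` then `x² ∣ φ` in `k⟦x,y⟧`. -/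
theorem X0sq_dvd_of_dvd_X1_mul {k : Type*} [Field k] (φ : MvPowerSeries (Fin 2) k)
    (h : (X 0 : MvPowerSeries (Fin 2) k) ^ 2 ∣ X 1 * φ) :
    (X 0 : MvPowerSeries (Fin 2) k) ^ 2 ∣ φ := by
  rw [X_pow_dvd_iff] at h ⊢
  intro m hm
  have key := h (Finsupp.single (1 : Fin 2) 1 + m) ?_
  · rwa [coeff_X_mul_shift] at key
  · simpa [Finsupp.add_apply, Finsupp.single_apply] using hm

/-- Let `R = k⟦x,y⟧/(x²y)` and `M₂ = R/(x²)`. Then the trace ideal of `M₂`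
equals `(y)R`, and the intersection of the trace ideals of `M₁ = R/(y)` and `M₂ = R/(x²)`
is the zero ideal. -/
theorem traceIdeal_R_mod_xsq_and_intersection_zero
    (k : Type*) [Field k] :
    traceIdeal (Dinf k) (Dinf k ⧸ Ideal.span {(xD k) ^ 2}) = Ideal.span {yD k} ∧
      traceIdeal (Dinf k) (Dinf k ⧸ Ideal.span {yD k}) ⊓
        traceIdeal (Dinf k) (Dinf k ⧸ Ideal.span {(xD k) ^ 2}) = ⊥ := by
  classical
  set I : Ideal (MvPowerSeries (Fin 2) k) :=
    Ideal.span {(X 0 : MvPowerSeries (Fin 2) k) ^ 2 * X 1} with hI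
  have hX0sq : (X 0 : MvPowerSeries (Fin 2) k) ^ 2 ≠ 0 := pow_ne_zero 2 (X_ne_zero' 0)
  have hX1 : (X 1 : MvPowerSeries (Fin 2) k) ≠ 0 := X_ne_zero' 1
  have hmkmul : ∀ f g : MvPowerSeries (Fin 2) k,
      Ideal.Quotient.mk I (f * g)
        = Ideal.Quotient.mk I f * Ideal.Quotient.mk I g := fun f g => map_mul _ f g
  have hx2 : (xD k) ^ 2 = Ideal.Quotient.mk I ((X 0 : MvPowerSeries (Fin 2) k) ^ 2) := by
    rw [xD, ← map_pow]
  have h1 : traceIdeal (Dinf k) (Dinf k ⧸ Ideal.span {(xD k) ^ 2})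
      = Ideal.span {yD k} := by
    rw [traceIdeal_quot_span ((xD k) ^ 2)]
    apply le_antisymm
    · intro r hr
      obtain ⟨f, rfl⟩ := Ideal.Quotient.mk_surjective r
      have h0 : Ideal.Quotient.mk I ((X 0 : MvPowerSeries (Fin 2) k) ^ 2 * f) = 0 := by
        rw [hmkmul, ← hx2]
        simpa only [LinearMap.mem_ker, LinearMap.mulLeft_apply] using hr
      rw [Ideal.Quotient.eq_zero_iff_mem, hI, Ideal.mem_span_singleton] at h0
      obtain ⟨g, hg⟩ := h0
      have hf : f = X 1 * g := by
        apply mul_left_cancel₀ hX0sq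
        rw [hg]; ring
      rw [Ideal.mem_span_singleton]
      exact ⟨Ideal.Quotient.mk I g, by rw [hf, hmkmul, yD]⟩
    · rw [Ideal.span_le, Set.singleton_subset_iff]
      simp only [SetLike.mem_coe, LinearMap.mem_ker, LinearMap.mulLeft_apply]
      rw [hx2, yD, ← map_mul, Ideal.Quotient.eq_zero_iff_mem]
      exact Ideal.subset_span rfl
  refine ⟨h1, ?_⟩
  rw [h1, traceIdeal_quot_span (yD k)]
  rw [eq_bot_iff]
  intro r hr
  obtain ⟨h2, h3⟩ := Submodule.mem_inf.mp hr
  rw [Ideal.mem_span_singleton] at h3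
  obtain ⟨c, hc⟩ := h3
  obtain ⟨c₀, rfl⟩ := Ideal.Quotient.mk_surjective c
  have hr' : r = Ideal.Quotient.mk I (X 1 * c₀) := by rw [hmkmul, ← yD, ← hc]
  have h4 : Ideal.Quotient.mk I (X 1 * (X 1 * c₀)) = 0 := by
    rw [hmkmul, ← yD, ← hr']
    simpa only [LinearMap.mem_ker, LinearMap.mulLeft_apply] using h2
  rw [Ideal.Quotient.eq_zero_iff_mem, hI, Ideal.mem_span_singleton] at h4
  obtain ⟨g, hg⟩ := h4
  have h5 : (X 1 : MvPowerSeries (Fin 2) k) * c₀ = X 0 ^ 2 * g := by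
    apply mul_left_cancel₀ hX1
    rw [hg]; ring
  have h6 : (X 0 : MvPowerSeries (Fin 2) k) ^ 2 ∣ c₀ :=
    X0sq_dvd_of_dvd_X1_mul c₀ ⟨g, h5⟩
  obtain ⟨d, hd⟩ := h6
  have : r = 0 := by
    rw [hr', hd, Ideal.Quotient.eq_zero_iff_mem, hI, Ideal.mem_span_singleton]
    exact ⟨d, by ring⟩
  simp [this]
end

section
/- Let k be an algebraically closed field of characteristic not 2, with i ∈ k a square root of −1, and R = k[[x,y,z]]/(x²+z²). Then the trace ideal of the R-module R/(z−ix) equals the ideal (z+ix), the trace ideal of R/(z+ix) equals (z−ix), and the intersection (z+ix) ∩ (z−ix) is the zero ideal of R. -/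
/-- The ring `R = k⟦x,y,z⟧/(x² + z²)`. -/
noncomputable abbrev Ainf2 (k : Type*) [Field k] : Type _ :=
  MvPowerSeries (Fin 3) k ⧸
    Ideal.span {(MvPowerSeries.X 0 : MvPowerSeries (Fin 3) k) ^ 2 + MvPowerSeries.X 2 ^ 2}

/-- The image of `x` in `R = k⟦x,y,z⟧/(x² + z²)`. -/
noncomputable def x10 (k : Type*) [Field k] : Ainf2 k :=
  Ideal.Quotient.mk _ (MvPowerSeries.X 0 : MvPowerSeries (Fin 3) k)

/-- The image of `z` in `R = k⟦x,y,z⟧/(x² + z²)`. -/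
noncomputable def z10 (k : Type*) [Field k] : Ainf2 k :=
  Ideal.Quotient.mk _ (MvPowerSeries.X 2 : MvPowerSeries (Fin 3) k)

/-- The image of a scalar `i ∈ k` in `R = k⟦x,y,z⟧/(x² + z²)`. -/
noncomputable def c10 (k : Type*) [Field k] (i : k) : Ainf2 k :=
  Ideal.Quotient.mk _ (MvPowerSeries.C (σ := Fin 3) (R := k) i)

open MvPowerSeries Finsupp in
private lemma aux_X2_dvd' {k : Type*} [Field k] {p q : MvPowerSeries (Fin 3) k}
    (h : X 0 * p = X 2 * q) : (X 2 : MvPowerSeries (Fin 3) k) ∣ p := by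
  rw [X_dvd_iff]
  intro m hm
  have h1 : coeff (single (0 : Fin 3) 1 + m) (X 0 * p) = coeff m p := by
    rw [X_def, coeff_add_monomial_mul, one_mul]
  have h2 : coeff (single (0 : Fin 3) 1 + m) (X 2 * q) = 0 :=
    X_dvd_iff.mp ⟨q, rfl⟩ _ (by simp [Finsupp.single_apply, hm])
  rw [h, h2] at h1
  exact h1.symm

open MvPowerSeries Finsupp in
private lemma aux_X_ne_zero' {k : Type*} [Field k] (s : Fin 3) :
    (X s : MvPowerSeries (Fin 3) k) ≠ 0 := by
  intro h
  have := coeff_index_single_self_X (R := k) s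
  rw [h, map_zero] at this
  exact one_ne_zero this.symm

open MvPowerSeries Finsupp in
private lemma aux_sub_ne_zero' {k : Type*} [Field k] (c : k) :
    (X 2 + C (σ := Fin 3) (R := k) c * X 0 : MvPowerSeries (Fin 3) k) ≠ 0 := by
  intro h
  have := congrArg (coeff (R := k) (single (2 : Fin 3) 1)) h
  rw [map_add, coeff_index_single_self_X, coeff_C_mul, coeff_index_single_X, map_zero] at this
  simp at this

private lemma traceIdeal_quot_eq' {R : Type*} [CommRing R] (a b : R)
    (hab : a * b = 0) (h : ∀ r : R, a * r = 0 → r ∈ Ideal.span {b}) :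
    traceIdeal R (R ⧸ Ideal.span {a}) = Ideal.span {b} := by
  apply le_antisymm
  · apply iSup_le
    intro f
    rintro y ⟨m, rfl⟩
    obtain ⟨s, rfl⟩ := Ideal.Quotient.mk_surjective m
    have hsmul : ∀ r : R, Ideal.Quotient.mk (Ideal.span {a}) r
        = r • Ideal.Quotient.mk (Ideal.span {a}) 1 := by
      intro r
      have := Submodule.Quotient.mk_smul (Ideal.span {a}) r (1 : R)
      rw [smul_eq_mul, mul_one] at this
      exact this.symm ▸ rfl
    have ha0 : a * f (Ideal.Quotient.mk (Ideal.span {a}) 1) = 0 := by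
      have : f (Ideal.Quotient.mk (Ideal.span {a}) a) = 0 := by
        rw [Ideal.Quotient.eq_zero_iff_mem.mpr (Ideal.mem_span_singleton_self a), map_zero]
      rw [hsmul a, map_smul, smul_eq_mul] at this
      exact this
    rw [hsmul s, map_smul, smul_eq_mul]
    exact Ideal.mul_mem_left _ s (h _ ha0)
  · rw [Ideal.span_le, Set.singleton_subset_iff]
    have hker : (Ideal.span {a} : Submodule R R) ≤
        LinearMap.ker (LinearMap.toSpanSingleton R R b) := by
      rw [Ideal.span_le, Set.singleton_subset_iff]
      simp only [SetLike.mem_coe, LinearMap.mem_ker, LinearMap.toSpanSingleton_apply,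
        smul_eq_mul, hab]
    set g := Submodule.liftQ (Ideal.span {a} : Submodule R R)
      (LinearMap.toSpanSingleton R R b) hker with hg
    have hb : b ∈ LinearMap.range g := by
      refine ⟨Submodule.Quotient.mk 1, ?_⟩
      rw [hg, Submodule.liftQ_apply, LinearMap.toSpanSingleton_apply, one_smul]
    exact (le_iSup (fun f : (R ⧸ Ideal.span {a}) →ₗ[R] R => LinearMap.range f) g) hb

set_option maxHeartbeats 2000000 in
open MvPowerSeries in
/-- Let `k` be an algebraically closed field of characteristic `≠ 2` with
`i ∈ k` satisfying `i² = -1`, and `R = k⟦x,y,z⟧/(x² + z²)`. Then the trace ideal of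
`R/(z - ix)` equals `(z + ix)`, the trace ideal of `R/(z + ix)` equals `(z - ix)`, and
`(z + ix) ∩ (z - ix) = (0)`. -/
theorem traceIdeals_Dinfty_two_dim
    (k : Type*) [Field k] [IsAlgClosed k] (h2 : (2 : k) ≠ 0)
    (i : k) (hi : i ^ 2 = -1) :
    traceIdeal (Ainf2 k) (Ainf2 k ⧸ Ideal.span {z10 k - c10 k i * x10 k})
        = Ideal.span {z10 k + c10 k i * x10 k} ∧
      traceIdeal (Ainf2 k) (Ainf2 k ⧸ Ideal.span {z10 k + c10 k i * x10 k})
        = Ideal.span {z10 k - c10 k i * x10 k} ∧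
      Ideal.span {z10 k + c10 k i * x10 k} ⊓ Ideal.span {z10 k - c10 k i * x10 k}
        = (⊥ : Ideal (Ainf2 k)) := by
  classical
  set Sk := MvPowerSeries (Fin 3) k with hSk
  set Cc : k →+* Sk := MvPowerSeries.C (σ := Fin 3) (R := k) with hCc
  set fp : Sk := MvPowerSeries.X 0 ^ 2 + MvPowerSeries.X 2 ^ 2 with hfp
  set ap : Sk := MvPowerSeries.X 2 - Cc i * MvPowerSeries.X 0 with hap
  set bp : Sk := MvPowerSeries.X 2 + Cc i * MvPowerSeries.X 0 with hbp
  set I0 : Ideal Sk := Ideal.span {fp} with hI0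
  set mk : Sk →+* Ainf2 k := Ideal.Quotient.mk I0 with hmk
  have hCi2 : Cc i ^ 2 = -1 := by rw [← map_pow, hi, map_neg, map_one]
  have hab : ap * bp = fp := by
    have e : ap * bp = MvPowerSeries.X 2 ^ 2 - Cc i ^ 2 * MvPowerSeries.X 0 ^ 2 := by
      rw [hap, hbp]; ring
    rw [e, hCi2, hfp]; ring
  have hane : ap ≠ 0 := by
    have := aux_sub_ne_zero' (k := k) (-i)
    rwa [map_neg, neg_mul, ← sub_eq_add_neg] at this
  have hbne : bp ≠ 0 := aux_sub_ne_zero' (k := k) i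
  have hfne : fp ≠ 0 := hab ▸ mul_ne_zero hane hbne
  have hA : z10 k - c10 k i * x10 k = mk ap := by
    rw [hap, map_sub, map_mul]; rfl
  have hB : z10 k + c10 k i * x10 k = mk bp := by
    rw [hbp, map_add, map_mul]; rfl
  have hABzero : mk ap * mk bp = 0 := by
    rw [← map_mul, hab]
    exact Ideal.Quotient.eq_zero_iff_mem.mpr (Ideal.mem_span_singleton_self fp)
  -- annihilator computations
  have ann : ∀ (a b : Sk), a ≠ 0 → a * b = fp →
      ∀ r : Ainf2 k, mk a * r = 0 → r ∈ Ideal.span {mk b} := by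
    intro a b ha hfab r hr
    obtain ⟨t, rfl⟩ := Ideal.Quotient.mk_surjective r
    rw [hmk] at hr
    rw [← map_mul, Ideal.Quotient.eq_zero_iff_mem, hI0, Ideal.mem_span_singleton] at hr
    obtain ⟨c, hc⟩ := hr
    have e : a * t = a * (b * c) := by rw [hc, ← hfab]; ring
    have ht : t = b * c := mul_left_cancel₀ ha e
    rw [Ideal.mem_span_singleton, ht, map_mul]
    exact Dvd.intro _ rfl
  refine ⟨?_, ?_, ?_⟩
  · rw [hA, hB]
    exact traceIdeal_quot_eq' (mk ap) (mk bp) hABzero (ann ap bp hane hab)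
  · rw [hA, hB]
    exact traceIdeal_quot_eq' (mk bp) (mk ap)
      (by rw [mul_comm]; exact hABzero) (ann bp ap hbne (by rw [mul_comm]; exact hab))
  · rw [hA, hB, eq_bot_iff]
    intro t ht
    obtain ⟨h1, h2'⟩ := Submodule.mem_inf.mp ht
    rw [Ideal.mem_span_singleton] at h1 h2'
    obtain ⟨u, hu⟩ := h1
    obtain ⟨v, hv⟩ := h2'
    have hat : mk ap * t = 0 := by
      rw [hu, ← mul_assoc, hABzero, zero_mul]
    have hbt : mk bp * t = 0 := by
      rw [hv, ← mul_assoc, mul_comm (mk bp) (mk ap), hABzero, zero_mul]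
    obtain ⟨tt, rfl⟩ := Ideal.Quotient.mk_surjective t
    rw [hmk, ← map_mul, Ideal.Quotient.eq_zero_iff_mem, hI0, Ideal.mem_span_singleton] at hat hbt
    obtain ⟨p, hp⟩ := hat
    obtain ⟨q, hq⟩ := hbt
    -- X 2 * tt divisible by fp
    have hx2 : MvPowerSeries.X 2 * tt = fp * (Cc (2⁻¹ : k) * (p + q)) := by
      have h22 : Cc (2⁻¹ : k) * (2 : Sk) = 1 := by
        rw [show ((2 : Sk)) = Cc (2 : k) by rw [map_ofNat], ← map_mul,
          inv_mul_cancel₀ h2, map_one]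
      have e : ap * tt + bp * tt = (2 : Sk) * (MvPowerSeries.X 2 * tt) := by
        rw [hap, hbp]; ring
      calc MvPowerSeries.X 2 * tt
          = (Cc (2⁻¹ : k) * 2) * (MvPowerSeries.X 2 * tt) := by rw [h22, one_mul]
        _ = Cc (2⁻¹ : k) * (ap * tt + bp * tt) := by rw [e]; ring
        _ = Cc (2⁻¹ : k) * (fp * p + fp * q) := by rw [hp, hq]
        _ = fp * (Cc (2⁻¹ : k) * (p + q)) := by ring
    have hx0 : MvPowerSeries.X 0 * tt = fp * (Cc ((2 * i)⁻¹ : k) * (q - p)) := by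
      have h22 : Cc ((2 * i)⁻¹ : k) * ((2 : Sk) * Cc i) = 1 := by
        rw [show ((2 : Sk)) = Cc (2 : k) by rw [map_ofNat], ← map_mul, ← map_mul,
          inv_mul_cancel₀ (mul_ne_zero h2 (fun h0 => by simp [h0] at hi)), map_one]
      have e : bp * tt - ap * tt = ((2 : Sk) * Cc i) * (MvPowerSeries.X 0 * tt) := by
        rw [hap, hbp]; ring
      calc MvPowerSeries.X 0 * tt
          = (Cc ((2 * i)⁻¹ : k) * ((2 : Sk) * Cc i)) * (MvPowerSeries.X 0 * tt) := by
            rw [h22, one_mul]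
        _ = Cc ((2 * i)⁻¹ : k) * (bp * tt - ap * tt) := by rw [e]; ring
        _ = Cc ((2 * i)⁻¹ : k) * (fp * q - fp * p) := by rw [hp, hq]
        _ = fp * (Cc ((2 * i)⁻¹ : k) * (q - p)) := by ring
    set P : Sk := Cc ((2 * i)⁻¹ : k) * (q - p) with hP
    set Q : Sk := Cc (2⁻¹ : k) * (p + q) with hQ
    -- X 0 * Q = X 2 * P  (after cancelling fp)
    have hcan : MvPowerSeries.X 0 * Q = MvPowerSeries.X 2 * P := by
      have : fp * (MvPowerSeries.X 0 * Q) = fp * (MvPowerSeries.X 2 * P) := by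
        calc fp * (MvPowerSeries.X 0 * Q) = MvPowerSeries.X 0 * (fp * Q) := by ring
          _ = MvPowerSeries.X 0 * (MvPowerSeries.X 2 * tt) := by rw [← hx2]
          _ = MvPowerSeries.X 2 * (MvPowerSeries.X 0 * tt) := by ring
          _ = MvPowerSeries.X 2 * (fp * P) := by rw [← hx0]
          _ = fp * (MvPowerSeries.X 2 * P) := by ring
      exact mul_left_cancel₀ hfne this
    obtain ⟨r, hr⟩ := aux_X2_dvd' hcan
    have : MvPowerSeries.X 2 * tt = MvPowerSeries.X 2 * (fp * r) := by
      rw [hx2, hr]; ring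
    have htt : tt = fp * r := mul_left_cancel₀ (aux_X_ne_zero' (k := k) 2) this
    rw [Submodule.mem_bot]
    exact Ideal.Quotient.eq_zero_iff_mem.mpr (Ideal.mem_span_singleton.mpr ⟨r, htt⟩)
end
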